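/- arXiv:2204.00127 — 2 statements merged into one kernel-verified Lean document; each statement's English description precedes it below -/
import Mathlib

section
/- Fix R > 0, ε > 0, k > 0, τ̄ > 0. Let ξ, ν ∈ ℝ² with ν ≠ 0 and ⟪ξ,ν⟫ ≤ 0, and set τ̂*(ξ,ν) = −⟪ξ,ν⟫/(‖ν‖² + ε), K_δ(s) = 1/2 + (1/2)·tanh(k(s − δ)), and τ̂(ξ,ν) = τ̂*(ξ,ν)·K₀(τ̂*(ξ,ν)) + (τ̄ − τ̂*(ξ,ν))·K_τ̄(τ̂*(ξ,ν)). If 0 ≤ τ̂(ξ,ν) ≤ 2·τ̂*(ξ,ν), then the future-focused barrier satisfies h_τ̂(ξ,ν) := ‖ξ + τ̂(ξ,ν)·ν‖² − (2R)² ≤ ‖ξ‖² − (2R)² =: h₀(ξ). -/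
/-!
Expanding the square, `‖ξ + t • ν‖² = ‖ξ‖² + t (2⟪ξ, ν⟫ + t ‖ν‖²)`, so the barrier does not
increase as long as `0 ≤ t` and `t ‖ν‖² ≤ -2⟪ξ, ν⟫`. The bound `τ̂ ≤ 2 τ̂*` gives the latter,
because the regularization only enlarges the denominator of `τ̂*`.
-/

open RealInnerProductSpace

/-- The smooth switch `K_δ(s) = 1/2 + (1/2)·tanh(k(s − δ))`. -/
noncomputable def Ksw (k δ s : ℝ) : ℝ :=
  1 / 2 + 1 / 2 * Real.tanh (k * (s - δ))

/-- The regularized minimizing time `τ̂*(ξ,ν) = −⟪ξ,ν⟫/(‖ν‖² + ε)`. -/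
noncomputable def tauHatStar (ε : ℝ) (ξ ν : EuclideanSpace ℝ (Fin 2)) : ℝ :=
  -⟪ξ, ν⟫ / (‖ν‖ ^ 2 + ε)

/-- The smoothed look-ahead time `τ̂ = τ̂*·K₀(τ̂*) + (τ̄ − τ̂*)·K_τ̄(τ̂*)`. -/
noncomputable def tauHat (ε k τbar : ℝ) (ξ ν : EuclideanSpace ℝ (Fin 2)) : ℝ :=
  tauHatStar ε ξ ν * Ksw k 0 (tauHatStar ε ξ ν) +
    (τbar - tauHatStar ε ξ ν) * Ksw k τbar (tauHatStar ε ξ ν)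

theorem norm_add_smul_sq_le_norm_sq {E : Type*} [NormedAddCommGroup E] [InnerProductSpace ℝ E]
    {x v : E} {t : ℝ} (ht : 0 ≤ t) (h : t * ‖v‖ ^ 2 ≤ -2 * ⟪x, v⟫) :
    ‖x + t • v‖ ^ 2 ≤ ‖x‖ ^ 2 := by
  have hexpand : ‖x + t • v‖ ^ 2 = ‖x‖ ^ 2 + t * (2 * ⟪x, v⟫ + t * ‖v‖ ^ 2) := by
    rw [norm_add_sq_real, real_inner_smul_right, norm_smul, Real.norm_of_nonneg ht]
    ring
  rw [hexpand]
  nlinarith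

theorem mul_norm_sq_le_of_le_two_mul_tauHatStar {ε t : ℝ} {ξ ν : EuclideanSpace ℝ (Fin 2)}
    (hε : 0 < ε) (ht : 0 ≤ t) (h : t ≤ 2 * tauHatStar ε ξ ν) :
    t * ‖ν‖ ^ 2 ≤ -2 * ⟪ξ, ν⟫ := by
  have hden : 0 < ‖ν‖ ^ 2 + ε := by positivity
  have hscaled : t * (‖ν‖ ^ 2 + ε) ≤ -2 * ⟪ξ, ν⟫ := by
    rw [tauHatStar, mul_div_assoc', le_div_iff₀ hden] at h
    linarith
  nlinarith [mul_nonneg ht hε.le]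

theorem ffcbf_le_nominal_general
    (R ε k τbar : ℝ) (hε : 0 < ε)
    (ξ ν : EuclideanSpace ℝ (Fin 2))
    (h0 : 0 ≤ tauHat ε k τbar ξ ν)
    (h2 : tauHat ε k τbar ξ ν ≤ 2 * tauHatStar ε ξ ν) :
    ‖ξ + tauHat ε k τbar ξ ν • ν‖ ^ 2 - (2 * R) ^ 2 ≤ ‖ξ‖ ^ 2 - (2 * R) ^ 2 :=
  sub_le_sub_right
    (norm_add_smul_sq_le_norm_sq h0 (mul_norm_sq_le_of_le_two_mul_tauHatStar hε h0 h2)) _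

/-- If `0 ≤ τ̂ ≤ 2τ̂*`, the future-focused barrier is below the nominal barrier:
`h_τ̂(ξ,ν) ≤ h₀(ξ)`. -/
theorem ffcbf_le_nominal
    (R ε k τbar : ℝ) (hR : 0 < R) (hε : 0 < ε) (hk : 0 < k) (hτ : 0 < τbar)
    (ξ ν : EuclideanSpace ℝ (Fin 2)) (hν : ν ≠ 0) (hip : ⟪ξ, ν⟫ ≤ 0)
    (h0 : 0 ≤ tauHat ε k τbar ξ ν)
    (h2 : tauHat ε k τbar ξ ν ≤ 2 * tauHatStar ε ξ ν) :
    ‖ξ + tauHat ε k τbar ξ ν • ν‖ ^ 2 - (2 * R) ^ 2 ≤ ‖ξ‖ ^ 2 - (2 * R) ^ 2 :=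
  ffcbf_le_nominal_general R ε k τbar hε ξ ν h0 h2
end

section
/- Fix ε > 0, k > 0, τ̄ > 0. Let ξ, ν ∈ ℝ² with ⟪ξ,ν⟫ ≤ 0, set τ̂*(ξ,ν) = −⟪ξ,ν⟫/(‖ν‖² + ε), K_δ(s) = 1/2 + (1/2)·tanh(k(s − δ)), and τ̂(ξ,ν) = τ̂*(ξ,ν)·K₀(τ̂*(ξ,ν)) + (τ̄ − τ̂*(ξ,ν))·K_τ̄(τ̂*(ξ,ν)). Then τ̂(ξ,ν) > 0. -/
/-!
Since `τ̂* ≥ 0` and the switch `K_δ(s)` is decreasing in the shift `δ`, we have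
`τ̂*·K₀(τ̂*) ≥ τ̂*·K_τ̄(τ̂*)`, hence `τ̂ ≥ τ̄·K_τ̄(τ̂*)`, which is positive because `tanh > -1`.
-/

open RealInnerProductSpace

namespace Real

theorem tanh_le_tanh_iff {x y : ℝ} : tanh x ≤ tanh y ↔ x ≤ y := by
  rw [← artanh_le_artanh_iff ⟨neg_one_lt_tanh x, tanh_lt_one x⟩
    ⟨neg_one_lt_tanh y, tanh_lt_one y⟩, artanh_tanh, artanh_tanh]

theorem monotone_tanh : Monotone tanh := fun _ _ ↦ tanh_le_tanh_iff.2

end Real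

theorem Ksw_pos (k δ s : ℝ) : 0 < Ksw k δ s := by
  have := Real.neg_one_lt_tanh (k * (s - δ))
  unfold Ksw
  linarith

theorem Ksw_le_Ksw_of_le {k δ₁ δ₂ : ℝ} (hk : 0 ≤ k) (hδ : δ₁ ≤ δ₂) (s : ℝ) :
    Ksw k δ₂ s ≤ Ksw k δ₁ s := by
  have := Real.monotone_tanh (mul_le_mul_of_nonneg_left (sub_le_sub_left hδ s) hk)
  unfold Ksw
  linarith

theorem tauHatStar_nonneg {ε : ℝ} (hε : 0 ≤ ε) {ξ ν : EuclideanSpace ℝ (Fin 2)}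
    (hip : ⟪ξ, ν⟫ ≤ 0) : 0 ≤ tauHatStar ε ξ ν :=
  div_nonneg (neg_nonneg.2 hip) (by positivity)

theorem mul_Ksw_le_tauHat {ε k τbar : ℝ} (hk : 0 ≤ k) (hτ : 0 ≤ τbar)
    {ξ ν : EuclideanSpace ℝ (Fin 2)} (hstar : 0 ≤ tauHatStar ε ξ ν) :
    τbar * Ksw k τbar (tauHatStar ε ξ ν) ≤ tauHat ε k τbar ξ ν := by
  have hK := Ksw_le_Ksw_of_le hk hτ (tauHatStar ε ξ ν)
  have := mul_le_mul_of_nonneg_left hK hstar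
  unfold tauHat
  linarith

/-- If `⟪ξ,ν⟫ ≤ 0` (i.e. `τ̂* ≥ 0`), then the smoothed look-ahead time is strictly
positive. -/
theorem tauHat_pos
    (ε k τbar : ℝ) (hε : 0 < ε) (hk : 0 < k) (hτ : 0 < τbar)
    (ξ ν : EuclideanSpace ℝ (Fin 2)) (hip : ⟪ξ, ν⟫ ≤ 0) :
    tauHat ε k τbar ξ ν > 0 :=
  (mul_pos hτ (Ksw_pos _ _ _)).trans_le
    (mul_Ksw_le_tauHat hk.le hτ.le (tauHatStar_nonneg hε.le hip))
end
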